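/- Two threshold graphs with the same degree sequence are isomorphic; that is, a threshold graph is determined up to isomorphism by its degree sequence. -/

import Mathlib

open SimpleGraph Finset

/-- A threshold graph: there exist a nonnegative vertex weight function and a
nonnegative threshold `t` such that distinct vertices are adjacent iff the sum
of their weights exceeds `t`. -/
def SimpleGraph.IsThreshold {V : Type} (G : SimpleGraph V) : Prop :=
  ∃ (f : V → ℝ) (t : ℝ), (∀ v, 0 ≤ f v) ∧ 0 ≤ t ∧
    ∀ u v : V, u ≠ v → (G.Adj u v ↔ f u + f v > t)

/-- Degree of a vertex (no decidability assumptions). -/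
noncomputable def SimpleGraph.deg {V : Type} [Fintype V] (G : SimpleGraph V) (v : V) : ℕ :=
  Nat.card {u // G.Adj v u}

/-- `δ 0 = 0 < δ 1 < ⋯ < δ m` are exactly the degrees occurring in `G`;
the degree partition of `G` is `D_i = {v : deg v = δ i}`, `i = 0, …, m`. -/
structure SimpleGraph.DegreePartition {V : Type} [Fintype V] (G : SimpleGraph V)
    (m : ℕ) (δ : ℕ → ℕ) : Prop where
  zero : δ 0 = 0
  mono : ∀ i j, i < j → j ≤ m → δ i < δ j
  cover : ∀ v : V, ∃ i ≤ m, G.deg v = δ i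
  attained : ∀ i, 1 ≤ i → i ≤ m → ∃ v : V, G.deg v = δ i

/-- The degree set `D_i` of the degree partition. -/
noncomputable def SimpleGraph.Dset {V : Type} [Fintype V] (G : SimpleGraph V)
    (δ : ℕ → ℕ) (i : ℕ) : Finset V :=
  Finset.univ.filter (fun v => G.deg v = δ i)

/-- A key edge of a threshold graph with degree partition `D_0, …, D_m`: an edge
joining `D_k` and `D_{m+1-k}` for some `1 ≤ k ≤ ⌈m/2⌉`. -/
def SimpleGraph.IsKeyEdge {V : Type} [Fintype V] (G : SimpleGraph V)
    (m : ℕ) (δ : ℕ → ℕ) (e : Sym2 V) : Prop :=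
  e ∈ G.edgeSet ∧ ∃ x y k, e = s(x, y) ∧ 1 ≤ k ∧ k ≤ (m + 1) / 2 ∧
    G.deg x = δ k ∧ G.deg y = δ (m + 1 - k)

/-- The number of Hamilton cycles of `G`, counted as unordered spanning cycles
(a cycle is identified with its edge set). -/
noncomputable def SimpleGraph.hamCycleCount {V : Type} [Fintype V] [DecidableEq V]
    (G : SimpleGraph V) : ℕ :=
  Nat.card {s : Finset (Sym2 V) // ∃ (v : V) (w : G.Walk v v),
    w.IsHamiltonianCycle ∧ w.edges.toFinset = s}

/-- The multiset of degrees of `G`. -/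
noncomputable def SimpleGraph.degMultiset {V : Type} [Fintype V] (G : SimpleGraph V) :
    Multiset ℕ :=
  Finset.univ.val.map G.deg

/-- The degree sequence `n-1, n-1, n-2, …, ⌈n/2⌉, ⌈n/2⌉, …, 3, 2` of the graph `Gₙ`,
as a multiset: the values `2, …, n-1` together with an extra copy of `⌈n/2⌉` and of `n-1`. -/
def gnDegSeq (n : ℕ) : Multiset ℕ :=
  (Multiset.range (n - 2)).map (· + 2) + {(n + 1) / 2, n - 1}

/-- An independent set in a graph. -/
def SimpleGraph.IsIndepSet' {V : Type} (G : SimpleGraph V) (S : Set V) : Prop :=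
  ∀ u ∈ S, ∀ v ∈ S, u ≠ v → ¬ G.Adj u v

/-!
A threshold graph has a universal or an isolated vertex `v`, and a vertex `w` of the other
graph with the same degree is then of the same kind. Deleting `v` and `w` keeps both graphs
threshold and lowers every remaining degree by one, resp. by zero, so the smaller graphs again
have equal degree multisets. By induction on the number of vertices they are isomorphic, and
the isomorphism extends by `v ↦ w`.
-/

namespace SimpleGraph

variable {V W : Type}

theorem IsThreshold.comap {G : SimpleGraph V} (hG : G.IsThreshold) (f : W → V)
    (hf : Function.Injective f) : (G.comap f).IsThreshold := by
  obtain ⟨g, t, hg, ht, hadj⟩ := hG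
  exact ⟨g ∘ f, t, fun _ => hg _, ht, fun a b hab => hadj _ _ (hf.ne hab)⟩

/-- A vertex of maximal weight is universal unless it misses some `u`; then
`f v + f u ≤ t`, and a vertex of minimal weight sees nobody. -/
theorem IsThreshold.exists_isUniversal_or_isIsolated [Finite V] [Nonempty V]
    {G : SimpleGraph V} (hG : G.IsThreshold) :
    (∃ v, G.IsUniversal v) ∨ ∃ v, G.IsIsolated v := by
  obtain ⟨f, t, -, -, hadj⟩ := hG
  obtain ⟨v, hv⟩ := Finite.exists_max f
  by_cases hvu : G.IsUniversal v
  · exact .inl ⟨v, hvu⟩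
  obtain ⟨u, hvu, hnadj⟩ : ∃ u, v ≠ u ∧ ¬ G.Adj v u := by
    simpa [IsUniversal] using hvu
  have hsum : f v + f u ≤ t := not_lt.mp fun h => hnadj ((hadj v u hvu).mpr h)
  obtain ⟨w, hw⟩ := Finite.exists_min f
  refine .inr ⟨w, fun x hx => ?_⟩
  have := (hadj w x hx.ne).mp hx
  linarith [hw u, hv x]

section Degree

variable [Fintype V] (G : SimpleGraph V)

theorem deg_eq_degree [DecidableRel G.Adj] (v : V) : G.deg v = G.degree v := by
  rw [← card_neighborSet_eq_degree, ← Nat.card_eq_fintype_card]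
  rfl

theorem deg_eq_zero_iff {v : V} : G.deg v = 0 ↔ G.IsIsolated v := by
  classical
  rw [deg_eq_degree, degree_eq_zero]

theorem deg_eq_card_sub_one_iff {v : V} : G.deg v = Fintype.card V - 1 ↔ G.IsUniversal v := by
  classical
  rw [deg_eq_degree, degree_eq_card_sub_one]

theorem card_eq_of_degMultiset_eq [Fintype W] {H : SimpleGraph W}
    (h : G.degMultiset = H.degMultiset) : Fintype.card V = Fintype.card W := by
  simpa [degMultiset] using congrArg Multiset.card h

theorem exists_deg_eq_of_degMultiset_eq [Fintype W] {H : SimpleGraph W}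
    (h : G.degMultiset = H.degMultiset) (v : V) : ∃ w, H.deg w = G.deg v := by
  have : G.deg v ∈ H.degMultiset := h ▸ Multiset.mem_map_of_mem _ (Finset.mem_univ_val v)
  simpa [degMultiset] using this

theorem exists_isUniversal_of_degMultiset_eq [Fintype W] {H : SimpleGraph W}
    (h : G.degMultiset = H.degMultiset) {v : V} (hv : G.IsUniversal v) :
    ∃ w, H.IsUniversal w := by
  obtain ⟨w, hw⟩ := G.exists_deg_eq_of_degMultiset_eq h v
  refine ⟨w, H.deg_eq_card_sub_one_iff.mp ?_⟩
  rw [hw, G.deg_eq_card_sub_one_iff.mpr hv, G.card_eq_of_degMultiset_eq h]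

theorem exists_isIsolated_of_degMultiset_eq [Fintype W] {H : SimpleGraph W}
    (h : G.degMultiset = H.degMultiset) {v : V} (hv : G.IsIsolated v) : ∃ w, H.IsIsolated w := by
  obtain ⟨w, hw⟩ := G.exists_deg_eq_of_degMultiset_eq h v
  exact ⟨w, H.deg_eq_zero_iff.mp (hw.trans (G.deg_eq_zero_iff.mpr hv))⟩

end Degree

def deleteVert (G : SimpleGraph V) (v : V) : SimpleGraph {x // x ≠ v} :=
  G.comap Subtype.val

theorem IsThreshold.deleteVert {G : SimpleGraph V} (hG : G.IsThreshold) (v : V) :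
    (G.deleteVert v).IsThreshold :=
  hG.comap _ Subtype.val_injective

theorem card_deleteVert [Fintype V] [DecidableEq V] (v : V) :
    Fintype.card {x // x ≠ v} + 1 = Fintype.card V := by
  rw [← Fintype.card_option, Fintype.card_congr (Equiv.optionSubtypeNe v)]

section DeleteVert

variable [Fintype V] [DecidableEq V] {G : SimpleGraph V} {v : V}

theorem deg_deleteVert (u : {x // x ≠ v}) :
    (G.deleteVert v).deg u = (G.neighborSet u \ {v}).ncard := by
  rw [← Nat.card_coe_set_eq]
  exact Nat.card_congr
    { toFun := fun a => ⟨a.1.1, a.2, a.1.2⟩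
      invFun := fun b => ⟨⟨b.1, b.2.2⟩, b.2.1⟩ }

theorem deg_deleteVert_of_isUniversal (hv : G.IsUniversal v) (u : {x // x ≠ v}) :
    (G.deleteVert v).deg u = G.deg u - 1 := by
  rw [deg_deleteVert, Set.ncard_sdiff_singleton_of_mem (s := G.neighborSet u) (hv u.2.symm).symm]
  rfl

theorem deg_deleteVert_of_isIsolated (hv : G.IsIsolated v) (u : {x // x ≠ v}) :
    (G.deleteVert v).deg u = G.deg u := by
  rw [deg_deleteVert, Set.sdiff_singleton_eq_self fun h => hv u h.symm]
  rfl

theorem degMultiset_deleteVert_eq_map (g : ℕ → ℕ)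
    (hg : ∀ u, (G.deleteVert v).deg u = g (G.deg u)) :
    (G.deleteVert v).degMultiset = (G.degMultiset.erase (G.deg v)).map g := by
  unfold degMultiset
  rw [← Multiset.cons_erase (Finset.mem_univ_val v), Multiset.map_cons,
    Multiset.erase_cons_head, ← Finset.erase_val, ← Finset.filter_ne',
    ← Finset.univ_val_map_subtype_val, Multiset.map_map, Multiset.map_map]
  exact Multiset.map_congr rfl fun u _ => hg u

theorem IsUniversal.degMultiset_deleteVert (hv : G.IsUniversal v) :
    (G.deleteVert v).degMultiset = (G.degMultiset.erase (Fintype.card V - 1)).map (· - 1) := by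
  rw [degMultiset_deleteVert_eq_map (· - 1) (deg_deleteVert_of_isUniversal hv),
    G.deg_eq_card_sub_one_iff.mpr hv]

theorem IsIsolated.degMultiset_deleteVert (hv : G.IsIsolated v) :
    (G.deleteVert v).degMultiset = G.degMultiset.erase 0 := by
  rw [degMultiset_deleteVert_eq_map id (deg_deleteVert_of_isIsolated hv),
    G.deg_eq_zero_iff.mpr hv, Multiset.map_id]

end DeleteVert

theorem nonempty_iso_of_deleteVert [DecidableEq V] [DecidableEq W] {G : SimpleGraph V}
    {H : SimpleGraph W} {v : V} {w : W} (e : G.deleteVert v ≃g H.deleteVert w)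
    (h : ∀ a : {x // x ≠ v}, G.Adj v a ↔ H.Adj w (e a)) : Nonempty (G ≃g H) := by
  let φ : V ≃ W := (Equiv.optionSubtypeNe v).symm.trans
    (e.toEquiv.optionCongr.trans (Equiv.optionSubtypeNe w))
  refine ⟨⟨φ, fun {x y} => ?_⟩⟩
  obtain ⟨x, rfl⟩ := (Equiv.optionSubtypeNe v).surjective x
  obtain ⟨y, rfl⟩ := (Equiv.optionSubtypeNe v).surjective y
  cases x <;> cases y <;>
    simp only [φ, Equiv.trans_apply, Equiv.symm_apply_apply] <;>
    simp [h, adj_comm]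
  exact e.map_adj_iff

theorem IsThreshold.exists_deleteVert_degMultiset_eq [Fintype V] [Fintype W] [DecidableEq V]
    [DecidableEq W] [Nonempty V] {G : SimpleGraph V} {H : SimpleGraph W} (hG : G.IsThreshold)
    (h : G.degMultiset = H.degMultiset) :
    ∃ v w, (∀ (a : {x // x ≠ v}) (b : {y // y ≠ w}), G.Adj v a ↔ H.Adj w b) ∧
      (G.deleteVert v).degMultiset = (H.deleteVert w).degMultiset := by
  rcases hG.exists_isUniversal_or_isIsolated with ⟨v, hv⟩ | ⟨v, hv⟩
  · obtain ⟨w, hw⟩ := G.exists_isUniversal_of_degMultiset_eq h hv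
    refine ⟨v, w, fun a b => iff_of_true (hv a.2.symm) (hw b.2.symm), ?_⟩
    rw [hv.degMultiset_deleteVert, hw.degMultiset_deleteVert, h, G.card_eq_of_degMultiset_eq h]
  · obtain ⟨w, hw⟩ := G.exists_isIsolated_of_degMultiset_eq h hv
    refine ⟨v, w, fun a b => iff_of_false (hv a) (hw b), ?_⟩
    rw [hv.degMultiset_deleteVert, hw.degMultiset_deleteVert, h]

end SimpleGraph

/-- two threshold graphs with the same degree sequence are isomorphic. -/
theorem stmt18 {V W : Type} [Fintype V] [Fintype W] (G : SimpleGraph V) (H : SimpleGraph W)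
    (hG : G.IsThreshold) (hH : H.IsThreshold) (hdeg : G.degMultiset = H.degMultiset) :
    Nonempty (G ≃g H) := by
  classical
  have hcard := G.card_eq_of_degMultiset_eq hdeg
  induction hn : Fintype.card V generalizing V W with
  | zero =>
    have : IsEmpty V := Fintype.card_eq_zero_iff.mp hn
    have : IsEmpty W := Fintype.card_eq_zero_iff.mp (hcard ▸ hn)
    exact ⟨⟨Equiv.equivOfIsEmpty V W, fun {a} => isEmptyElim a⟩⟩
  | succ n ih =>
    have : Nonempty V := Fintype.card_pos_iff.mp (by omega)
    obtain ⟨v, w, hvw, hdel⟩ := hG.exists_deleteVert_degMultiset_eq hdeg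
    have := card_deleteVert v
    have := card_deleteVert w
    obtain ⟨e⟩ := ih _ _ (hG.deleteVert v) (hH.deleteVert w) hdel (by omega) (by omega)
    exact nonempty_iso_of_deleteVert e fun a => hvw a (e a)
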